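/- Let p be an odd prime, m ≥ 2, and let x_1, ..., x_m be a basis of (Z/pZ)^m. Let B'_m be the multiset consisting of p−2 copies of x_1 together with the elements x_j + a·x_1 for each 2 ≤ j ≤ m and 0 ≤ a ≤ p−1. Then −x_1 ∉ ΣB'_m; in particular #ΣB'_m ≤ p^m − 1. -/

import Mathlib

/-!
Split a submultiset of `B'_m` into `k ≤ p - 2` copies of `x₁` and, for each `j ≥ 2`, a part `Bⱼ`
of the progression `x_j, x_j + x₁, …, x_j + (p - 1) x₁`. Since `-x₁ - k x₁` has zero
`x_j`-coordinate and only `Bⱼ` contributes to it, namely `|Bⱼ| mod p`, each `Bⱼ` is empty or the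
whole progression; both sum to `0` because `p ∣ 0 + 1 + ⋯ + (p - 1)` for odd `p`. Hence
`k x₁ = -x₁`, impossible for `1 ≤ k + 1 < p`.
-/

/-- The sumset ΣA of a multiset A: all sums of submultisets of A (including the empty sum 0). -/
def sumset {G : Type*} [AddCommMonoid G] (A : Multiset G) : Set G :=
  {x | ∃ B ≤ A, B.sum = x}

open Finset Pointwise

section Sumset

variable {G : Type*} [AddCommMonoid G]

theorem sumset_zero : sumset (0 : Multiset G) = {0} := by
  ext x
  simp [sumset, eq_comm]

theorem sumset_add (A C : Multiset G) : sumset (A + C) = sumset A + sumset C := by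
  classical
  ext x
  constructor
  · rintro ⟨B, hB, rfl⟩
    have hsplit : B ∩ A + (B - A) = B := by
      ext y
      simp only [Multiset.count_add, Multiset.count_inter, Multiset.count_sub]
      omega
    exact Set.mem_add.2 ⟨(B ∩ A).sum, ⟨B ∩ A, Multiset.inter_le_right, rfl⟩, (B - A).sum,
      ⟨B - A, Multiset.sub_le_iff_le_add'.2 hB, rfl⟩, by rw [← Multiset.sum_add, hsplit]⟩
  · rintro ⟨_, ⟨B₁, hB₁, rfl⟩, _, ⟨B₂, hB₂, rfl⟩, rfl⟩
    exact ⟨B₁ + B₂, add_le_add hB₁ hB₂, Multiset.sum_add _ _⟩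

theorem sumset_sum {ι : Type*} (s : Finset ι) (f : ι → Multiset G) :
    sumset (∑ i ∈ s, f i) = ∑ i ∈ s, sumset (f i) := by
  induction s using Finset.cons_induction with
  | empty => exact sumset_zero
  | cons i s hi ih => rw [sum_cons, sum_cons, sumset_add, ih]

theorem sumset_replicate (n : ℕ) (x : G) :
    sumset (Multiset.replicate n x) = {y | ∃ k ≤ n, k • x = y} := by
  ext y
  simp only [sumset, Multiset.le_replicate_iff, Set.mem_ofPred_eq]
  constructor
  · rintro ⟨B, ⟨k, hk, rfl⟩, rfl⟩
    exact ⟨k, hk, (Multiset.sum_replicate k x).symm⟩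
  · rintro ⟨k, hk, rfl⟩
    exact ⟨_, ⟨k, hk, rfl⟩, Multiset.sum_replicate k x⟩

theorem map_eq_zero_of_mem_sumset {H : Type*} [AddCommMonoid H] (φ : G →+ H) {A : Multiset G}
    (hA : ∀ x ∈ A, φ x = 0) {y : G} (hy : y ∈ sumset A) : φ y = 0 := by
  obtain ⟨B, hB, rfl⟩ := hy
  rw [map_multiset_sum]
  exact Multiset.sum_eq_zero fun z hz ↦ by
    obtain ⟨x, hx, rfl⟩ := Multiset.mem_map.1 hz
    exact hA x (Multiset.mem_of_le hB hx)

/-- A submultiset `B ≤ A` has `φ (ΣB) = |B| mod p`; this forces `B = 0` or `B = A`. -/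
theorem eq_zero_of_mem_sumset_of_map_eq_zero {p : ℕ} (φ : G →+ ZMod p) {A : Multiset G}
    (hφA : ∀ x ∈ A, φ x = 1) (hcard : A.card = p) (hsum : A.sum = 0) {y : G}
    (hy : y ∈ sumset A) (hφy : φ y = 0) : y = 0 := by
  obtain ⟨B, hB, rfl⟩ := hy
  have hφB : φ B.sum = B.card := by
    rw [map_multiset_sum, Multiset.map_congr rfl fun x hx ↦ hφA x (Multiset.mem_of_le hB hx),
      Multiset.map_const', Multiset.sum_replicate, nsmul_one]
  rw [hφB, ZMod.natCast_eq_zero_iff] at hφy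
  rcases (Multiset.card_le_card hB).lt_or_eq with hlt | heq
  · rw [Multiset.card_eq_zero.1 (Nat.eq_zero_of_dvd_of_lt hφy (hcard ▸ hlt)), Multiset.sum_zero]
  · rwa [Multiset.eq_of_le_of_card_le hB heq.ge]

end Sumset

section Progression

variable {V : Type*}

def progression [AddCommMonoid V] (p : ℕ) (v u : V) : Multiset V :=
  ∑ a ∈ range p, {v + a • u}

theorem card_progression [AddCommMonoid V] (p : ℕ) (v u : V) : (progression p v u).card = p := by
  simp [progression]

theorem mem_progression [AddCommMonoid V] {p : ℕ} {v u w : V} :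
    w ∈ progression p v u ↔ ∃ a < p, w = v + a • u := by
  simp [progression, Multiset.mem_sum]

variable {p : ℕ} [AddCommGroup V] [Module (ZMod p) V]

theorem sum_range_nsmul_eq_zero_of_odd (hp : Odd p) (u : V) : (∑ a ∈ range p, a) • u = 0 := by
  obtain ⟨t, ht⟩ := hp
  have : ∑ a ∈ range p, a = t * p := by
    rw [sum_range_id, ht, Nat.add_sub_cancel,
      show (2 * t + 1) * (2 * t) = 2 * (t * (2 * t + 1)) by ring, Nat.mul_div_cancel_left _ two_pos]
  rw [this, mul_nsmul, ZModModule.char_nsmul_eq_zero]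

theorem sum_progression_eq_zero (hp : Odd p) (v u : V) : (progression p v u).sum = 0 := by
  rw [progression, ← Multiset.coe_sumAddMonoidHom, map_sum]
  simp only [Multiset.coe_sumAddMonoidHom, Multiset.sum_singleton]
  rw [sum_add_distrib, sum_const, card_range, ← sum_smul, sum_range_nsmul_eq_zero_of_odd hp,
    ZModModule.char_nsmul_eq_zero, add_zero]

end Progression

theorem Set.ncard_le_card_sub_one {α : Type*} [Finite α] {s : Set α} {x : α} (hx : x ∉ s) :
    s.ncard ≤ Nat.card α - 1 :=
  Nat.le_sub_one_of_lt <| Set.ncard_lt_card fun h ↦ hx (h ▸ Set.mem_univ x)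

namespace Module.Basis

variable {p : ℕ} {ι M : Type*} [AddCommGroup M] [Module (ZMod p) M] (b : Basis ι (ZMod p) M)

theorem coord_apply_eq (i : ι) : b.coord i (b i) = 1 := by
  rw [coord_apply, repr_self, Finsupp.single_eq_same]

theorem coord_apply_ne {i j : ι} (h : i ≠ j) : b.coord i (b j) = 0 := by
  rw [coord_apply, repr_self, Finsupp.single_eq_of_ne h]

theorem nsmul_ne_neg {k : ℕ} (hk : k + 1 < p) (i : ι) : k • b i ≠ -b i := by
  intro h
  have h' := congrArg (b.coord i) h
  rw [map_nsmul, map_neg, coord_apply_eq, nsmul_one, eq_neg_iff_add_eq_zero] at h'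
  exact absurd ((ZMod.natCast_eq_zero_iff (k + 1) p).1 (by exact_mod_cast h'))
    (Nat.not_dvd_of_pos_of_lt k.succ_pos hk)

theorem coord_of_mem_progression {i j i₀ : ι} (hi : i ≠ i₀) {x : M}
    (hx : x ∈ progression p (b j) (b i₀)) : b.coord i x = b.coord i (b j) := by
  obtain ⟨a, -, rfl⟩ := mem_progression.1 hx
  rw [map_add, map_nsmul, b.coord_apply_ne hi, nsmul_zero, add_zero]

theorem eq_zero_of_mem_sumset_progression (hp : Odd p) {i₀ : ι} {s : Finset ι} (hs : i₀ ∉ s)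
    {y : ι → M} (hy : ∀ j ∈ s, y j ∈ sumset (progression p (b j) (b i₀)))
    (hsum : ∀ j ∈ s, b.coord j (∑ j' ∈ s, y j') = 0) (j : ι) (hj : j ∈ s) : y j = 0 := by
  have hj₀ : j ≠ i₀ := ne_of_mem_of_not_mem hj hs
  refine eq_zero_of_mem_sumset_of_map_eq_zero (b.coord j).toAddMonoidHom
    (fun x hx ↦ (b.coord_of_mem_progression hj₀ hx).trans (b.coord_apply_eq j))
    (card_progression _ _ _) (sum_progression_eq_zero hp _ _) (hy j hj) ?_
  have hoff (j' : ι) (hj' : j' ∈ s) (hne : j' ≠ j) : b.coord j (y j') = 0 :=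
    map_eq_zero_of_mem_sumset (b.coord j).toAddMonoidHom
      (fun x hx ↦ (b.coord_of_mem_progression hj₀ hx).trans (b.coord_apply_ne hne.symm))
      (hy j' hj')
  have := hsum j hj
  rwa [map_sum, sum_eq_single_of_mem j hj hoff] at this

end Module.Basis

theorem stmt_16 (p : ℕ) (hp : p.Prime) (hodd : Odd p) (m : ℕ) (hm : 2 ≤ m)
    (b : Module.Basis (Fin m) (ZMod p) (Fin m → ZMod p))
    (B'm : Multiset (Fin m → ZMod p))
    (hB'm : B'm = Multiset.replicate (p - 2) (b ⟨0, by omega⟩) +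
        ∑ j ∈ Finset.univ.erase (⟨0, by omega⟩ : Fin m), ∑ a ∈ Finset.range p,
          ({b j + a • b ⟨0, by omega⟩} : Multiset (Fin m → ZMod p))) :
    -(b ⟨0, by omega⟩) ∉ sumset B'm ∧ (sumset B'm).ncard ≤ p ^ m - 1 := by
  have := Fact.mk hp
  set i₀ : Fin m := ⟨0, by omega⟩
  have hnot : -b i₀ ∉ sumset B'm := by
    rw [hB'm, sumset_add, sumset_replicate, sumset_sum, Set.mem_add]
    rintro ⟨_, ⟨k, hk, rfl⟩, _, hmem, hsum⟩
    obtain ⟨y, hy, rfl⟩ := (Set.mem_finsetSum _ _ _).1 hmem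
    have hy_zero := b.eq_zero_of_mem_sumset_progression hodd (notMem_erase i₀ univ)
      (fun j hj ↦ hy hj) fun j hj ↦ by
        rw [eq_sub_of_add_eq' hsum, map_sub, map_neg, map_nsmul,
          b.coord_apply_ne (ne_of_mem_erase hj), neg_zero, nsmul_zero, sub_zero]
    rw [sum_eq_zero hy_zero, add_zero] at hsum
    exact b.nsmul_ne_neg (by have := hp.two_le; omega) i₀ hsum
  refine ⟨hnot, ?_⟩
  simpa using Set.ncard_le_card_sub_one hnot
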